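/- Let (X, M, μ) be a measure space. The condition sup{μ(E) : E ∈ M, μ(E) < ∞} < ∞ holds if and only if X can be written as a disjoint union X = E₁ ∪ E₂ of measurable sets where μ(E₁) < ∞ and either μ(E₂) = 0 or E₂ is an atom of infinite measure. -/

import Mathlib

open MeasureTheory ENNReal

/-
The supremum s of the finite values of μ is attained: if μ Aₙ ↑ s, then E = ⋃ Aₙ has μ E = s,
since its finite partial unions still have finite measure. When s < ∞, adding to E a disjoint
measurable set F of finite measure cannot exceed s, so μ F = 0: every finite-measure subset of
Eᶜ is null, which is exactly the dichotomy "Eᶜ is null or an atom of infinite measure".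
Conversely, if every finite-measure subset of E₁ᶜ is null, each finite value μ F equals
μ (F ∩ E₁) ≤ μ E₁.
-/

namespace MeasureTheory.Measure

variable {X : Type*} [MeasurableSpace X] {μ : Measure X}

theorem exists_measurableSet_measure_eq_sSup (μ : Measure X) :
    ∃ E, MeasurableSet E ∧ μ E = sSup (μ '' {E : Set X | MeasurableSet E ∧ μ E < ∞}) := by
  obtain ⟨u, -, hu_tendsto, hu_mem⟩ :=
    exists_seq_tendsto_sSup
      (Set.Nonempty.image μ (s := {E : Set X | MeasurableSet E ∧ μ E < ∞}) ⟨∅, .empty, by simp⟩)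
      (OrderTop.bddAbove _)
  choose A hA hμA using hu_mem
  refine ⟨⋃ n, A n, .iUnion fun n => (hA n).1, le_antisymm ?_ ?_⟩
  · rw [measure_iUnion_eq_iSup_accumulate]
    refine iSup_le fun n => le_sSup ⟨Set.accumulate A n, ⟨?_, ?_⟩, rfl⟩
    · exact .biUnion (Set.to_countable _) fun i _ => (hA i).1
    · exact measure_biUnion_lt_top (Set.finite_le_nat n) fun i _ => (hA i).2
  · refine le_of_tendsto' hu_tendsto fun n => ?_
    exact (hμA n).symm.le.trans (measure_mono (Set.subset_iUnion A n))

theorem measure_eq_zero_of_subset_compl_of_measure_eq_sSup {E F : Set X}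
    (hμE : μ E = sSup (μ '' {E : Set X | MeasurableSet E ∧ μ E < ∞})) (hE_fin : μ E < ∞)
    (hE : MeasurableSet E) (hF : MeasurableSet F) (hFE : F ⊆ Eᶜ) (hF_fin : μ F < ∞) :
    μ F = 0 := by
  have hunion : μ (E ∪ F) = μ E + μ F :=
    measure_union (disjoint_compl_right.mono_right hFE) hF
  have hle : μ E + μ F ≤ μ E + 0 := by
    rw [add_zero, ← hunion, hμE]
    exact le_sSup ⟨E ∪ F, ⟨hE.union hF, hunion ▸ ENNReal.add_lt_top.2 ⟨hE_fin, hF_fin⟩⟩, rfl⟩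
  exact nonpos_iff_eq_zero.1 ((ENNReal.add_le_add_iff_left hE_fin.ne).1 hle)

theorem sSup_le_of_subset_compl_measure_eq_zero {E : Set X} (hE : MeasurableSet E)
    (hnull : ∀ F ⊆ Eᶜ, MeasurableSet F → μ F < ∞ → μ F = 0) :
    sSup (μ '' {E : Set X | MeasurableSet E ∧ μ E < ∞}) ≤ μ E := by
  refine sSup_le ?_
  rintro _ ⟨F, ⟨hF, hF_fin⟩, rfl⟩
  have hdiff : μ (F \ E) = 0 := hnull _ (fun _ hx => hx.2) (hF.diff hE)
    ((measure_mono Set.sdiff_subset).trans_lt hF_fin)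
  calc μ F = μ (F ∩ E) + μ (F \ E) := (measure_inter_add_sdiff F hE).symm
    _ = μ (F ∩ E) := by rw [hdiff, add_zero]
    _ ≤ μ E := measure_mono Set.inter_subset_right

theorem measure_eq_zero_or_infinite_atom_iff {E : Set X} (hE : MeasurableSet E) :
    (μ E = 0 ∨ (μ E = ∞ ∧ ∀ F ⊆ E, MeasurableSet F → μ F = 0 ∨ μ F = ∞)) ↔
      ∀ F ⊆ E, MeasurableSet F → μ F < ∞ → μ F = 0 := by
  refine ⟨?_, fun h => ?_⟩
  · rintro (hE | ⟨-, hatom⟩) F hFE hF hF_fin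
    · exact measure_mono_null hFE hE
    · exact (hatom F hFE hF).resolve_right hF_fin.ne
  · rcases eq_top_or_lt_top (μ E) with hE_inf | hE_fin
    · exact .inr ⟨hE_inf, fun F hFE hF => ((eq_top_or_lt_top (μ F)).imp_right (h F hFE hF)).symm⟩
    · exact .inl (h E subset_rfl hE hE_fin)

end MeasureTheory.Measure

open MeasureTheory.Measure in
theorem stmt_18 {X : Type*} [MeasurableSpace X] (μ : Measure X) :
    sSup (μ '' {E : Set X | MeasurableSet E ∧ μ E < ∞}) < ∞ ↔
    ∃ E₁ E₂ : Set X, MeasurableSet E₁ ∧ MeasurableSet E₂ ∧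
      E₁ ∪ E₂ = Set.univ ∧ E₁ ∩ E₂ = ∅ ∧ μ E₁ < ∞ ∧
      (μ E₂ = 0 ∨ (μ E₂ = ∞ ∧ ∀ F ⊆ E₂, MeasurableSet F → μ F = 0 ∨ μ F = ∞)) := by
  constructor
  · intro hs
    obtain ⟨E, hE, hμE⟩ := exists_measurableSet_measure_eq_sSup μ
    have hE_fin : μ E < ∞ := hμE ▸ hs
    refine ⟨E, Eᶜ, hE, hE.compl, Set.union_compl_self E, Set.inter_compl_self E, hE_fin, ?_⟩
    exact (measure_eq_zero_or_infinite_atom_iff hE.compl).2 fun F hFE hF =>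
      measure_eq_zero_of_subset_compl_of_measure_eq_sSup hμE hE_fin hE hF hFE
  · rintro ⟨E₁, E₂, hE₁, hE₂_meas, hunion, hinter, hE₁_fin, hE₂⟩
    have hcompl : E₁ᶜ = E₂ := (IsCompl.of_eq hinter hunion).compl_eq
    subst hcompl
    exact (sSup_le_of_subset_compl_measure_eq_zero hE₁
      ((measure_eq_zero_or_infinite_atom_iff hE₂_meas).1 hE₂)).trans_lt hE₁_fin
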